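/- arXiv:math/0506420 — 4 statements merged into one kernel-verified Lean document; each statement's English description precedes it below -/
import Mathlib

section
/- Let V be a finite vector space over GF(2), let F1, F2 : V → V, and suppose there exist a GF(2)-linear automorphism L of V × V and g ∈ V × V such that L maps the graph G_{F1} = {(x, F1(x)) : x ∈ V} bijectively onto g + G_{F2}, where G_{F2} = {(x, F2(x)) : x ∈ V}. Then for every (a,b) ∈ V × V, δ_{F1}(a,b) = δ_{F2}(L(a,b)); that is, the number of x with F1(x+a) + F1(x) = b equals the number of y with F2(y+a') + F2(y) = b', where (a',b') = L(a,b). -/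
private lemma char2_add_self {W : Type*} [AddCommGroup W] [Module (ZMod 2) W] (v : W) :
    v + v = 0 := by
  have h : (2 : ZMod 2) • v = v + v := two_smul _ v
  rw [show (2 : ZMod 2) = 0 by decide, zero_smul] at h
  exact h.symm

private lemma char2_add_cancel {W : Type*} [AddCommGroup W] [Module (ZMod 2) W] (v w : W) :
    v + w + w = v := by
  rw [add_assoc, char2_add_self, add_zero]

theorem stmt_9 (V : Type*) [AddCommGroup V] [Module (ZMod 2) V] [Finite V]
    (F1 F2 : V → V) (L : (V × V) ≃ₗ[ZMod 2] (V × V)) (g : V × V)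
    (hL : (fun p => L p) '' {p : V × V | ∃ x, p = (x, F1 x)} =
      (fun q => g + q) '' {p : V × V | ∃ x, p = (x, F2 x)}) :
    ∀ a b : V,
      ({x : V | F1 (x + a) + F1 x = b}).ncard =
        ({y : V | F2 (y + (L (a, b)).1) + F2 y = (L (a, b)).2}).ncard := by
  intro a b
  set a' := (L (a, b)).1 with ha'
  set b' := (L (a, b)).2 with hb'
  have hfwd : ∀ x : V, (L (x, F1 x) - g).2 = F2 ((L (x, F1 x) - g).1) := by
    intro x
    have hx : L (x, F1 x) ∈ (fun p => L p) '' {p : V × V | ∃ x, p = (x, F1 x)} :=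
      ⟨(x, F1 x), ⟨x, rfl⟩, rfl⟩
    rw [hL] at hx
    obtain ⟨q, ⟨y, rfl⟩, hq⟩ := hx
    rw [← hq]
    simp
  have hbwd : ∀ y : V, ∃ x : V, L (x, F1 x) = g + (y, F2 y) := by
    intro y
    have hy : g + (y, F2 y) ∈ (fun q => g + q) '' {p : V × V | ∃ x, p = (x, F2 x)} :=
      ⟨(y, F2 y), ⟨y, rfl⟩, rfl⟩
    rw [← hL] at hy
    obtain ⟨p, ⟨x, rfl⟩, hp⟩ := hy
    exact ⟨x, hp⟩
  set π : V → V := fun x => (L (x, F1 x) - g).1 with hπ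
  have hinj : Function.Injective π := by
    intro x1 x2 h
    have e : L (x1, F1 x1) - g = L (x2, F1 x2) - g := by
      apply Prod.ext
      · exact h
      · rw [hfwd x1, hfwd x2]
        exact congrArg F2 h
    have e2 : L (x1, F1 x1) = L (x2, F1 x2) := by
      have := sub_left_injective (b := g) e
      exact this
    have := L.injective e2
    exact (Prod.mk.injEq _ _ _ _).mp this |>.1
  have hstep : ∀ x : V, F1 (x + a) + F1 x = b →
      L (x + a, F1 (x + a)) = L (x, F1 x) + L (a, b) := by
    intro x hx
    rw [← map_add]
    congr 1
    apply Prod.ext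
    · rfl
    · show F1 (x + a) = F1 x + b
      rw [← hx, add_comm (F1 (x + a)) (F1 x), ← add_assoc, char2_add_self, zero_add]
  have hbij : Set.BijOn π {x : V | F1 (x + a) + F1 x = b}
      {y : V | F2 (y + a') + F2 y = b'} := by
    refine ⟨?_, hinj.injOn, ?_⟩
    · intro x hx
      simp only [Set.mem_setOf_eq] at hx ⊢
      have h1 := hstep x hx
      have hpi : π (x + a) = π x + a' := by
        show (L (x + a, F1 (x + a)) - g).1 = (L (x, F1 x) - g).1 + (L (a, b)).1
        rw [h1, add_sub_right_comm]
        rfl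
      have hsnd : (L (x + a, F1 (x + a)) - g).2 = (L (x, F1 x) - g).2 + b' := by
        rw [h1, add_sub_right_comm]
        rfl
      have e1 : F2 (π x + a') = F2 (π x) + b' := by
        rw [← hpi, ← hfwd (x + a), hsnd, hfwd x]
      rw [e1, add_comm (F2 (π x)) b', add_assoc, char2_add_self, add_zero]
    · intro y hy
      simp only [Set.mem_setOf_eq] at hy
      obtain ⟨x, hx⟩ := hbwd y
      obtain ⟨x', hx'⟩ := hbwd (y + a')
      have hπx : π x = y := by
        show (L (x, F1 x) - g).1 = y
        rw [hx]
        simp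
      have hLab : L (a, b) = (a', b') := rfl
      have key : L (x', F1 x') = L (x, F1 x) + L (a, b) := by
        rw [hx, hx', hLab, add_assoc]
        congr 1
        apply Prod.ext
        · rfl
        · show F2 (y + a') = F2 y + b'
          rw [← hy, add_comm (F2 (y + a')) (F2 y), ← add_assoc, char2_add_self, zero_add]
      rw [← map_add] at key
      have key2 : (x', F1 x') = ((x, F1 x) + (a, b) : V × V) := L.injective key
      have hx'1 : x' = x + a := congrArg Prod.fst key2
      have hx'2 : F1 x' = F1 x + b := congrArg Prod.snd key2
      have hmem : F1 (x + a) + F1 x = b := by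
        rw [← hx'1, hx'2, add_comm (F1 x) b, char2_add_cancel]
      exact ⟨x, hmem, hπx⟩
  rw [← hbij.image_eq]
  exact (Set.ncard_image_of_injOn hbij.injOn).symm
end

section
/- Let V be a finite vector space over GF(2), and let F1, F2 : V → V be CCZ equivalent, i.e., there exist a GF(2)-linear automorphism L of V × V and g ∈ V × V such that L maps the graph {(x, F1(x)) : x ∈ V} bijectively onto g + {(x, F2(x)) : x ∈ V}. If F1 is almost perfect nonlinear, then so is F2. -/
theorem stmt_10 (V : Type*) [AddCommGroup V] [Module (ZMod 2) V] [Finite V]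
    (F1 F2 : V → V) (L : (V × V) ≃ₗ[ZMod 2] (V × V)) (g : V × V)
    (hL : (fun p => L p) '' {p : V × V | ∃ x, p = (x, F1 x)} =
      (fun q => g + q) '' {p : V × V | ∃ x, p = (x, F2 x)})
    (hF1 : ∀ a : V, a ≠ 0 → ∀ b : V,
      ({x : V | F1 (x + a) + F1 x = b}).ncard ≤ 2) :
    ∀ a : V, a ≠ 0 → ∀ b : V,
      ({x : V | F2 (x + a) + F2 x = b}).ncard ≤ 2 := by
  intro a ha b
  -- characteristic two facts
  have addselfV : ∀ v : V, v + v = 0 := by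
    intro v
    have h := two_smul (ZMod 2) v
    rw [show (2 : ZMod 2) = 0 by decide, zero_smul] at h
    exact h.symm
  have addself : ∀ v : V × V, v + v = 0 := by
    intro v
    have h := two_smul (ZMod 2) v
    rw [show (2 : ZMod 2) = 0 by decide, zero_smul] at h
    exact h.symm
  -- key: L.symm sends g + graph of F2 into graph of F1
  have key : ∀ x : V, ∃ y, L.symm (g + (x, F2 x)) = (y, F1 y) := by
    intro x
    have hx : g + (x, F2 x) ∈ (fun q => g + q) '' {p : V × V | ∃ x, p = (x, F2 x)} :=
      ⟨(x, F2 x), ⟨x, rfl⟩, rfl⟩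
    rw [← hL] at hx
    obtain ⟨p, ⟨y, hy⟩, hp⟩ := hx
    exact ⟨y, by rw [← hp, L.symm_apply_apply, hy]⟩
  set φ : V → V := fun x => (L.symm (g + (x, F2 x))).1 with hφ
  have hgraph : ∀ x, L.symm (g + (x, F2 x)) = (φ x, F1 (φ x)) := by
    intro x
    obtain ⟨y, hy⟩ := key x
    have hxy : φ x = y := by rw [hφ]; simp [hy]
    rw [hxy, hy]
  have hinj : Function.Injective φ := by
    intro x x' h
    have h2 : L.symm (g + (x, F2 x)) = L.symm (g + (x', F2 x')) := by
      rw [hgraph x, hgraph x', h]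
    have h3 : (g + (x, F2 x)) = (g + (x', F2 x')) := L.symm.injective h2
    have h4 : ((x, F2 x) : V × V) = (x', F2 x') := by
      exact add_left_cancel h3
    exact (Prod.ext_iff.mp h4).1
  set ab' : V × V := L.symm (a, b) with hab'
  set a' : V := ab'.1
  set b' : V := ab'.2
  -- solutions map into solutions for F1 with (a', b')
  have hsub : φ '' {x : V | F2 (x + a) + F2 x = b} ⊆
      {y : V | F1 (y + a') + F1 y = b'} := by
    rintro _ ⟨x, hx, rfl⟩
    have hx' : F2 (x + a) = b + F2 x := by
      have := congrArg (· + F2 x) hx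
      simpa [add_assoc, addselfV] using this
    have heq : g + (x + a, F2 (x + a)) = (g + (x, F2 x)) + (a, b) := by
      rw [hx']
      ext <;> simp [add_comm, add_left_comm, Prod.fst_add, Prod.snd_add]
    have h2 : L.symm (g + (x + a, F2 (x + a))) = L.symm (g + (x, F2 x)) + ab' := by
      rw [heq, map_add]
    rw [hgraph (x + a), hgraph x] at h2
    have hfst : φ (x + a) = φ x + a' := (Prod.ext_iff.mp h2).1
    have hsnd : F1 (φ (x + a)) = F1 (φ x) + b' := (Prod.ext_iff.mp h2).2
    show F1 (φ x + a') + F1 (φ x) = b'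
    rw [← hfst, hsnd, add_comm (F1 (φ x)) b', add_assoc, addselfV, add_zero]
  have hcard : ({x : V | F2 (x + a) + F2 x = b}).ncard ≤
      ({y : V | F1 (y + a') + F1 y = b'}).ncard := by
    rw [← Set.ncard_image_of_injective _ hinj]
    exact Set.ncard_le_ncard hsub (Set.toFinite _)
  by_cases ha' : a' ≠ 0
  · exact hcard.trans (hF1 a' ha' b')
  · push_neg at ha'
    have hb' : b' ≠ 0 := by
      intro hb0
      apply ha
      have : ab' = 0 := by
        have : ab' = (a', b') := rfl
        rw [this, ha', hb0]; rfl
      have h0 : L.symm (a, b) = 0 := this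
      have : (a, b) = (0 : V × V) := by
        have := congrArg L h0
        simpa using this
      exact (Prod.ext_iff.mp this).1
    have hempty : {y : V | F1 (y + a') + F1 y = b'} = ∅ := by
      ext y
      simp only [Set.mem_setOf_eq, Set.mem_empty_iff_false, iff_false]
      rw [ha', add_zero, addselfV]
      exact fun h => hb' h.symm
    rw [hempty, Set.ncard_empty] at hcard
    exact hcard.trans (by norm_num)
end

section
/- Let K = GF(2^10), let ω ∈ K be an element of multiplicative order 3, let S = {ω·v : v ∈ K, v^32 = v, v ≠ 0} ∪ {ω²·v : v ∈ K, v^32 = v, v ≠ 0}, and for u ∈ K let F_u(x) = x³ + u·x³⁶. Then for every a ∈ K with a ≠ 0 and every u ∈ K: (i) a⁻³·F_u(a·x) = F_{u·a³³}(x) for all x ∈ K, so F_u and F_{u·a³³} are affine equivalent; and (ii) u·a³³ ∈ S if and only if u ∈ S. -/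
/-!
Substituting `x ↦ a * x` turns `x³ + u x³⁶` into `a³ (x³ + u a³³ x³⁶)`, and both the substitution
and the rescaling by `a⁻³` are `GF(2)`-linear bijections. For the invariance of `S`: since
`31 ≡ 1 (mod 3)`, the set `c · μ₃₁` for `c ∈ {ω, ω²}` is exactly the fibre of `x ↦ x³¹` over `c`,
and `(u a³³)³¹ = u³¹ a¹⁰²³ = u³¹`.
-/

theorem inv_pow_mul_add_mul_pow_mul {K : Type*} [Field K] {a : K} (ha : a ≠ 0) (u x : K)
    {m n : ℕ} (hmn : m ≤ n) :
    (a ^ m)⁻¹ * ((a * x) ^ m + u * (a * x) ^ n) = x ^ m + (u * a ^ (n - m)) * x ^ n := by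
  obtain ⟨k, rfl⟩ := Nat.exists_eq_add_of_le hmn
  rw [Nat.add_sub_cancel_left]
  field_simp
  ring

theorem exists_linearEquiv_add_mul_pow_scale (k : Type*) {K : Type*} [Field k] [Field K]
    [Algebra k K] {a : K} (ha : a ≠ 0) (u : K) {m n : ℕ} (hmn : m ≤ n) :
    ∃ (L1 L2 : K ≃ₗ[k] K) (c d : K), ∀ x,
      x ^ m + (u * a ^ (n - m)) * x ^ n = L2 ((L1 (x + c)) ^ m + u * (L1 (x + c)) ^ n) + d :=
  ⟨DistribMulAction.toLinearEquiv k K (Units.mk0 a ha),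
    DistribMulAction.toLinearEquiv k K (Units.mk0 (a ^ m)⁻¹ (inv_ne_zero (pow_ne_zero m ha))), 0, 0,
    fun x => by rw [add_zero, add_zero, ← inv_pow_mul_add_mul_pow_mul ha u x hmn]; rfl⟩

theorem mem_mul_image_iff_pow_eq {G₀ : Type*} [CommGroupWithZero G₀] {c : G₀} {n : ℕ}
    (hn : n ≠ 0) (hc0 : c ≠ 0) (hc : c ^ n = c) (x : G₀) :
    x ∈ (c * ·) '' {v : G₀ | v ^ (n + 1) = v ∧ v ≠ 0} ↔ x ^ n = c := by
  constructor
  · rintro ⟨v, ⟨hv, hv0⟩, rfl⟩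
    have hv1 : v ^ n = 1 := by
      rw [pow_succ] at hv
      exact (mul_eq_right₀ hv0).mp hv
    rw [mul_pow, hc, hv1, mul_one]
  · intro hx
    have hx0 : x ≠ 0 := by rintro rfl; exact hc0 (by rw [← hx, zero_pow hn])
    have hv1 : (c⁻¹ * x) ^ n = 1 := by rw [mul_pow, inv_pow, hc, hx, inv_mul_cancel₀ hc0]
    refine ⟨c⁻¹ * x, ⟨by rw [pow_succ, hv1, one_mul], mul_ne_zero (inv_ne_zero hc0) hx0⟩, ?_⟩
    simp only [← mul_assoc, mul_inv_cancel₀ hc0, one_mul]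

theorem mem_mul_image_union_iff_pow_eq_cubeRoot {G₀ : Type*} [CommGroupWithZero G₀] {ω : G₀}
    (hω : ω ^ 3 = 1) (x : G₀) :
    x ∈ ((ω * ·) '' {v : G₀ | v ^ 32 = v ∧ v ≠ 0}) ∪
        ((ω ^ 2 * ·) '' {v : G₀ | v ^ 32 = v ∧ v ≠ 0}) ↔
      x ^ 31 = ω ∨ x ^ 31 = ω ^ 2 := by
  have hω0 : ω ≠ 0 := ne_zero_pow three_ne_zero (hω ▸ one_ne_zero)
  have h1 : ω ^ 31 = ω := by rw [show 31 = 3 * 10 + 1 by rfl, pow_add, pow_mul, hω]; simp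
  have h2 : (ω ^ 2) ^ 31 = ω ^ 2 := by
    rw [← pow_mul, show 2 * 31 = 3 * 20 + 2 by rfl, pow_add, pow_mul, hω]; simp
  rw [Set.mem_union, mem_mul_image_iff_pow_eq (by norm_num) hω0 h1,
    mem_mul_image_iff_pow_eq (by norm_num) (pow_ne_zero 2 hω0) h2]

theorem GaloisField.pow_sub_one_eq_one {p n : ℕ} [Fact p.Prime] (hn : n ≠ 0)
    {a : GaloisField p n} (ha : a ≠ 0) : a ^ (p ^ n - 1) = 1 := by
  let := Fintype.ofFinite (GaloisField p n)
  rw [← GaloisField.card p n hn, Nat.card_eq_fintype_card]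
  exact FiniteField.pow_card_sub_one_eq_one a ha

theorem stmt_11 (ω : GaloisField 2 10) (hω : orderOf ω = 3)
    (a : GaloisField 2 10) (ha : a ≠ 0) (u : GaloisField 2 10) :
    ((∀ x : GaloisField 2 10,
        (a ^ 3)⁻¹ * ((a * x) ^ 3 + u * (a * x) ^ 36) =
          x ^ 3 + (u * a ^ 33) * x ^ 36) ∧
      (∃ (L1 L2 : GaloisField 2 10 ≃ₗ[ZMod 2] GaloisField 2 10)
          (c d : GaloisField 2 10),
        ∀ x : GaloisField 2 10,
          x ^ 3 + (u * a ^ 33) * x ^ 36 =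
            L2 ((L1 (x + c)) ^ 3 + u * (L1 (x + c)) ^ 36) + d)) ∧
    (u * a ^ 33 ∈ ((ω * ·) '' {v : GaloisField 2 10 | v ^ 32 = v ∧ v ≠ 0}) ∪
        ((ω ^ 2 * ·) '' {v : GaloisField 2 10 | v ^ 32 = v ∧ v ≠ 0}) ↔
      u ∈ ((ω * ·) '' {v : GaloisField 2 10 | v ^ 32 = v ∧ v ≠ 0}) ∪
        ((ω ^ 2 * ·) '' {v : GaloisField 2 10 | v ^ 32 = v ∧ v ≠ 0})) := by
  have hω3 : ω ^ 3 = 1 := hω ▸ pow_orderOf_eq_one ω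
  have ha1023 : a ^ 1023 = 1 := GaloisField.pow_sub_one_eq_one (p := 2) (n := 10) (by norm_num) ha
  have hpow : (u * a ^ 33) ^ 31 = u ^ 31 := by rw [mul_pow, ← pow_mul, ha1023, mul_one]
  refine ⟨⟨fun x => inv_pow_mul_add_mul_pow_mul ha u x (by norm_num),
    exists_linearEquiv_add_mul_pow_scale (ZMod 2) ha u (m := 3) (n := 36) (by norm_num)⟩, ?_⟩
  rw [mem_mul_image_union_iff_pow_eq_cubeRoot hω3, mem_mul_image_union_iff_pow_eq_cubeRoot hω3,
    hpow]
end

section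
/- Let K = GF(2^10). The power mappings x ↦ x³ and x ↦ x⁹ on K are not affine equivalent: there do not exist GF(2)-linear bijections L1, L2 : K → K and elements a, b ∈ K such that x⁹ = L2((L1(x + a))³) + b for all x ∈ K. -/
/-!
Every `GF(2)`-linear map of `K = GF(2^n)` is a linearized polynomial `∑ m_k x^(2^k)`, `k ∈ ℤ/n`,
with unique coefficients. Taking second differences in `x^9 = L₂((L₁(x + a))^3) + b` gives
`L₂⁻¹(x^8 y + x y^8) = L₁(x)^2 L₁(y) + L₁(x) L₁(y)^2`. The left side only contains the monomials
`x^(2^i) y^(2^j)` with `i - j = ±3`, so the coefficient of `x^(2^(k+1)) y^(2^k)` on the right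
vanishes: `m_k^3 = m_(k+1) m_(k-1)^2`. Then `m_(k+1) = r m_k^2` for a constant `r`, i.e.
`r L₁(x) = Tr(z x)` for some `z`, so `L₁` takes at most two values and cannot be a bijection.
-/

open Module FiniteField

theorem ZMod.forall_of_add_one {n : ℕ} [NeZero n] {P : ZMod n → Prop} {k₀ : ZMod n}
    (h₀ : P k₀) (h : ∀ k, P k → P (k + 1)) (k : ZMod n) : P k := by
  have key : ∀ t : ℕ, P (k₀ + t) := fun t => by
    induction t with
    | zero => simpa using h₀
    | succ t ih => simpa [add_assoc] using h _ ih
  simpa using key (k - k₀).val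

theorem Nat.card_le_two_of_injective_of_sq_eq_self {K : Type*} [Field K] {f : K → K}
    (hf : Function.Injective f) (h : ∀ x, f x ^ 2 = f x) : Nat.card K ≤ 2 := by
  classical
  have h01 : ∀ x, f x = 0 ∨ f x = 1 := fun x =>
    IsIdempotentElem.iff_eq_zero_or_one.mp ((sq (f x)).symm.trans (h x))
  have hg : Function.Injective fun x => decide (f x = 1) := by
    intro x y hxy
    apply hf
    rcases h01 x with hx | hx <;> rcases h01 y with hy | hy <;> simp_all
  simpa using Nat.card_le_card_of_injective _ hg

section Polar

variable {R : Type*} [CommRing R] [CharP R 2]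

theorem add_pow_two_pow_add_one_sub (s : ℕ) (x y : R) :
    (x + y) ^ (2 ^ s + 1) - x ^ (2 ^ s + 1) - y ^ (2 ^ s + 1) = x ^ 2 ^ s * y + x * y ^ 2 ^ s := by
  rw [pow_succ, pow_succ, pow_succ, add_pow_char_pow]
  ring

theorem polar_eq_of_forall_pow_eq {F G : Type*} [FunLike F R R] [AddMonoidHomClass F R R]
    [FunLike G R R] [AddMonoidHomClass G R R] (L₁ : F) (L₂ : G) (s t : ℕ) (a b : R)
    (h : ∀ x, x ^ (2 ^ s + 1) = L₂ (L₁ (x + a) ^ (2 ^ t + 1)) + b) (x y : R) :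
    x ^ 2 ^ s * y + x * y ^ 2 ^ s = L₂ (L₁ x ^ 2 ^ t * L₁ y + L₁ x * L₁ y ^ 2 ^ t) := by
  set u := L₁ x
  set v := L₁ y
  set c := L₁ a
  have hc : (u + v + c) ^ (2 ^ t + 1) - (u + c) ^ (2 ^ t + 1) - (v + c) ^ (2 ^ t + 1)
      + c ^ (2 ^ t + 1) = u ^ 2 ^ t * v + u * v ^ 2 ^ t := by
    linear_combination add_pow_two_pow_add_one_sub t (u + c) v
      - add_pow_two_pow_add_one_sub t v c + v * add_pow_char_pow (p := 2) (n := t) u c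
  have h0 : L₂ (c ^ (2 ^ t + 1)) + b = 0 := by simpa using (h 0).symm
  rw [← add_pow_two_pow_add_one_sub, h, h, h, ← hc]
  simp only [map_add, map_sub]
  linear_combination (-1 : R) * h0

end Polar

section Recurrence

variable {K : Type*} [Field K] {n : ℕ} [NeZero n] {m : ZMod n → K}

theorem ne_zero_of_pow_three_eq (hrec : ∀ k, m k ^ 3 = m (k + 1) * m (k - 1) ^ 2) (hm : m ≠ 0)
    (k : ZMod n) : m k ≠ 0 := by
  obtain ⟨k₀, hk₀⟩ := Function.ne_iff.mp hm
  refine ZMod.forall_of_add_one (P := fun j => m j ≠ 0) hk₀ (fun j hj hj' => hj ?_) k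
  simpa [hj'] using hrec j

theorem exists_mul_eq_sq_of_pow_three_eq (hrec : ∀ k, m k ^ 3 = m (k + 1) * m (k - 1) ^ 2)
    (hm : ∀ k, m k ≠ 0) : ∃ r ≠ 0, ∀ k, r * m (k + 1) = (r * m k) ^ 2 := by
  have hr : ∀ k, m (k + 1) / m k ^ 2 = m 1 / m 0 ^ 2 := by
    refine ZMod.forall_of_add_one (by rw [zero_add]) fun k hk => ?_
    rw [← hk, div_eq_div_iff (pow_ne_zero 2 (hm _)) (pow_ne_zero 2 (hm _))]
    simpa [pow_succ'] using (hrec (k + 1)).symm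
  refine ⟨m 1 / m 0 ^ 2, div_ne_zero (hm 1) (pow_ne_zero 2 (hm 0)), fun k => ?_⟩
  rw [← hr k]
  field_simp [hm k]

end Recurrence

namespace FiniteField

section Frobenius

variable (F : Type*) {L : Type*} [Field F] [Fintype F] [Field L] [Algebra F L] {n : ℕ}

/- `x ↦ x ^ (#F ^ k)`, indexed by `ZMod n` so that for `n = finrank F L` adding indices is
composing maps (`frobeniusAlgHomPow_add`). -/
variable (L n) in
noncomputable def frobeniusAlgHomPow (k : ZMod n) : L →ₐ[F] L :=
  frobeniusAlgHom F L ^ k.val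

local notation "σ" => frobeniusAlgHomPow F L n

section

variable [NeZero n]

noncomputable def frobeniusSum (m : ZMod n → L) (x : L) : L :=
  ∑ k, m k * σ k x

variable {F}

theorem frobeniusSum_add (c d : ZMod n → L) (x : L) :
    frobeniusSum F (c + d) x = frobeniusSum F c x + frobeniusSum F d x := by
  simp only [frobeniusSum, Pi.add_apply, add_mul, Finset.sum_add_distrib]

theorem frobeniusSum_single (a : ZMod n) (c x : L) :
    frobeniusSum F (Pi.single a c) x = c * σ a x := by
  simp [frobeniusSum, Pi.single_apply]

theorem mul_frobeniusSum (a : L) (c : ZMod n → L) (x : L) :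
    a * frobeniusSum F c x = frobeniusSum F (fun k => a * c k) x := by
  simp only [frobeniusSum, Finset.mul_sum, mul_assoc]

end

variable {F} [Finite L]

theorem frobeniusAlgHomPow_natCast (hn : finrank F L = n) (k : ℕ) :
    σ k = frobeniusAlgHom F L ^ k := by
  rw [frobeniusAlgHomPow, ZMod.val_natCast, ← hn, ← orderOf_frobeniusAlgHom, pow_mod_orderOf]

theorem frobeniusAlgHomPow_natCast_apply (hn : finrank F L = n) (k : ℕ) (x : L) :
    σ k x = x ^ Fintype.card F ^ k := by
  rw [frobeniusAlgHomPow_natCast hn, AlgHom.coe_pow, coe_frobeniusAlgHom, pow_iterate]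

variable [NeZero n]

theorem frobeniusAlgHomPow_add (hn : finrank F L = n) (j k : ZMod n) :
    σ (j + k) = σ j * σ k := by
  rw [← ZMod.natCast_zmod_val j, ← ZMod.natCast_zmod_val k, ← Nat.cast_add,
    frobeniusAlgHomPow_natCast hn, frobeniusAlgHomPow_natCast hn,
    frobeniusAlgHomPow_natCast hn, pow_add]

theorem frobeniusAlgHomPow_injective (hn : finrank F L = n) : Function.Injective σ := by
  intro j k h
  have hlt : ∀ k : ZMod n, k.val ∈ Set.Iio (orderOf (frobeniusAlgHom F L)) := by
    intro k
    rw [orderOf_frobeniusAlgHom, hn]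
    exact ZMod.val_lt k
  exact ZMod.val_injective n (pow_injOn_Iio_orderOf (hlt j) (hlt k) h)

theorem linearIndependent_frobeniusAlgHomPow (hn : finrank F L = n) :
    LinearIndependent L fun k => (σ k).toLinearMap :=
  (linearIndependent_algHom_toLinearMap F L L).comp σ (frobeniusAlgHomPow_injective hn)

theorem frobeniusSum_injective (hn : finrank F L = n) :
    Function.Injective (frobeniusSum F : (ZMod n → L) → L → L) := by
  intro c d h
  funext k
  refine Fintype.linearIndependent_iffₛ.mp (linearIndependent_frobeniusAlgHomPow hn) c d ?_ k
  ext x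
  simpa [frobeniusSum, Finset.sum_apply] using congrFun h x

theorem exists_frobeniusSum_eq (hn : finrank F L = n) (f : L →ₗ[F] L) :
    ∃ m : ZMod n → L, ⇑f = frobeniusSum F m := by
  have hcard : Fintype.card (ZMod n) = finrank L (L →ₗ[F] L) := by
    rw [finrank_linearMap_self, ZMod.card, hn]
  let B := basisOfLinearIndependentOfCardEqFinrank (linearIndependent_frobeniusAlgHomPow hn) hcard
  refine ⟨B.repr f, funext fun x => ?_⟩
  conv_lhs => rw [← B.sum_repr f]
  simp [B, frobeniusSum, Finset.sum_apply]

theorem map_frobeniusSum (hn : finrank F L = n) (j : ZMod n) (m : ZMod n → L) (x : L) :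
    σ j (frobeniusSum F m x) = frobeniusSum F (fun k => σ j (m (k - j))) x := by
  simp only [frobeniusSum, map_sum, map_mul]
  refine Fintype.sum_equiv (Equiv.addLeft j) _ _ fun k => ?_
  simp [frobeniusAlgHomPow_add hn, add_sub_cancel_left]

end Frobenius

section CharTwo

variable {K : Type*} [Field K] [Finite K] [Algebra (ZMod 2) K] {n : ℕ}

local notation "σ" => frobeniusAlgHomPow (ZMod 2) K n

theorem frobeniusAlgHomPow_natCast_apply_two (hn : finrank (ZMod 2) K = n) (k : ℕ) (x : K) :
    σ k x = x ^ 2 ^ k := by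
  simpa using frobeniusAlgHomPow_natCast_apply hn k x

theorem frobeniusAlgHomPow_one_apply (hn : finrank (ZMod 2) K = n) (x : K) :
    σ 1 x = x ^ 2 := by
  simpa using frobeniusAlgHomPow_natCast_apply_two hn 1 x

variable [NeZero n]

theorem frobeniusSum_sq (hn : finrank (ZMod 2) K = n) (m : ZMod n → K) (x : K) :
    frobeniusSum (ZMod 2) m x ^ 2 = frobeniusSum (ZMod 2) (fun k => m (k - 1) ^ 2) x := by
  simp only [← frobeniusAlgHomPow_one_apply hn, map_frobeniusSum hn]

theorem frobeniusSum_one_sq (hn : finrank (ZMod 2) K = n) (x : K) :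
    frobeniusSum (ZMod 2) (1 : ZMod n → K) x ^ 2 = frobeniusSum (ZMod 2) (1 : ZMod n → K) x := by
  simp [frobeniusSum_sq hn, Pi.one_def]

theorem coeff_pow_three_eq_of_forall_polar_eq [CharP K 2] (hn : finrank (ZMod 2) K = n)
    {m p : ZMod n → K} {s : ℕ} (hs : (s : ZMod n) ≠ 1) (hs' : (s : ZMod n) ≠ -1)
    (h : ∀ x y, frobeniusSum (ZMod 2) p (x ^ 2 ^ s * y + x * y ^ 2 ^ s) =
      frobeniusSum (ZMod 2) m x ^ 2 * frobeniusSum (ZMod 2) m y +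
        frobeniusSum (ZMod 2) m x * frobeniusSum (ZMod 2) m y ^ 2)
    (k : ZMod n) : m k ^ 3 = m (k + 1) * m (k - 1) ^ 2 := by
  have hσ : ∀ j x, σ j (x ^ 2 ^ s) = σ (j + s) x := fun j x => by
    rw [← frobeniusAlgHomPow_natCast_apply_two hn, frobeniusAlgHomPow_add hn, AlgHom.mul_apply]
  -- Compare the coefficients of `σ j y`, then those of `σ (k + 1) x`: on the left only the
  -- index shifts `±s` occur.
  have hy : ∀ x, (fun j => p j * σ (j + s) x + p (j - s) * σ (j - s) x) =
      fun j => frobeniusSum (ZMod 2) m x ^ 2 * m j + frobeniusSum (ZMod 2) m x * m (j - 1) ^ 2 :=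
      fun x => by
    apply frobeniusSum_injective hn
    funext y
    calc _ = frobeniusSum (ZMod 2) p (x ^ 2 ^ s * y + x * y ^ 2 ^ s) := by
          simp only [frobeniusSum, map_add, map_mul, hσ, add_mul, mul_add, Finset.sum_add_distrib]
          congr 1
          · exact Finset.sum_congr rfl fun j _ => by ring
          · refine Fintype.sum_equiv (Equiv.subRight (s : ZMod n)) _ _ fun j => ?_
            simp only [Equiv.subRight_apply, sub_add_cancel]
            ring
      _ = _ := h x y
      _ = _ := by
          rw [frobeniusSum_sq hn m y, mul_frobeniusSum, mul_frobeniusSum, ← frobeniusSum_add]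
          rfl
  have hx : Pi.single (k + s) (p k) + Pi.single (k - s) (p (k - s)) =
      fun i => m k * m (i - 1) ^ 2 + m (k - 1) ^ 2 * m i := by
    apply frobeniusSum_injective hn
    funext x
    rw [frobeniusSum_add, frobeniusSum_single, frobeniusSum_single, congrFun (hy x) k,
      frobeniusSum_sq hn m x]
    simp only [frobeniusSum, Finset.sum_mul, ← Finset.sum_add_distrib]
    exact Finset.sum_congr rfl fun i _ => by ring
  have hne : k + 1 ≠ k + s := fun e => hs (add_left_cancel e).symm
  have hne' : k + 1 ≠ k - s := fun e =>
    hs' (neg_eq_iff_eq_neg.mp (add_left_cancel (e.trans (sub_eq_add_neg k s))).symm)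
  have hk := congrFun hx (k + 1)
  simp only [Pi.add_apply, Pi.single_apply, if_neg hne, if_neg hne', add_sub_cancel_right] at hk
  linear_combination (-1 : K) * hk - m (k + 1) * m (k - 1) ^ 2 * CharTwo.two_eq_zero (R := K)

theorem exists_mul_frobeniusSum_eq (hn : finrank (ZMod 2) K = n) {m : ZMod n → K}
    (hrec : ∀ k, m k ^ 3 = m (k + 1) * m (k - 1) ^ 2) (hm : m ≠ 0) :
    ∃ r ≠ 0, ∃ z, ∀ x,
      r * frobeniusSum (ZMod 2) m x = frobeniusSum (ZMod 2) (1 : ZMod n → K) (z * x) := by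
  obtain ⟨r, hr, hstep⟩ :=
    exists_mul_eq_sq_of_pow_three_eq hrec (ne_zero_of_pow_three_eq hrec hm)
  have hσ : ∀ k, r * m k = σ k (r * m 0) := by
    refine ZMod.forall_of_add_one (P := fun k => r * m k = σ k (r * m 0)) (k₀ := 0)
      (by rw [frobeniusAlgHomPow, ZMod.val_zero, pow_zero, AlgHom.one_apply]) fun k hk => ?_
    rw [hstep, hk, ← frobeniusAlgHomPow_one_apply hn, ← AlgHom.mul_apply,
      ← frobeniusAlgHomPow_add hn, add_comm]
  refine ⟨r, hr, r * m 0, fun x => ?_⟩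
  rw [mul_frobeniusSum]
  simp only [frobeniusSum, Pi.one_apply, one_mul]
  exact Finset.sum_congr rfl fun k _ => by rw [hσ k, map_mul (σ k) (r * m 0) x]

theorem coeff_pow_three_eq_of_forall_pow_eq [CharP K 2] (hn : finrank (ZMod 2) K = n)
    (L₁ L₂ : K ≃ₗ[ZMod 2] K) (a b : K) {s : ℕ} (hs : (s : ZMod n) ≠ 1)
    (hs' : (s : ZMod n) ≠ -1) (h : ∀ x, x ^ (2 ^ s + 1) = L₂ (L₁ (x + a) ^ 3) + b)
    {m : ZMod n → K} (hm : ⇑L₁ = frobeniusSum (ZMod 2) m) (k : ZMod n) :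
    m k ^ 3 = m (k + 1) * m (k - 1) ^ 2 := by
  obtain ⟨p, hp⟩ := exists_frobeniusSum_eq hn L₂.symm.toLinearMap
  refine coeff_pow_three_eq_of_forall_polar_eq hn (p := p) hs hs' (fun x y => ?_) k
  have := polar_eq_of_forall_pow_eq L₁ L₂ s 1 a b h x y
  rw [← hm, ← hp]
  simpa using congrArg L₂.symm this

end CharTwo

end FiniteField

theorem stmt_15 :
    ¬ ∃ (L1 L2 : GaloisField 2 10 ≃ₗ[ZMod 2] GaloisField 2 10)
        (a b : GaloisField 2 10),
      ∀ x : GaloisField 2 10, x ^ 9 = L2 ((L1 (x + a)) ^ 3) + b := by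
  rintro ⟨L₁, L₂, a, b, h⟩
  have hn : finrank (ZMod 2) (GaloisField 2 10) = 10 := GaloisField.finrank 2 (by norm_num)
  obtain ⟨m, hm⟩ := exists_frobeniusSum_eq hn L₁.toLinearMap
  replace hm : ⇑L₁ = frobeniusSum (ZMod 2) m := hm
  have hrec :=
    coeff_pow_three_eq_of_forall_pow_eq hn L₁ L₂ a b (s := 3) (by decide) (by decide) h hm
  have hm₀ : m ≠ 0 := by
    rintro rfl
    exact one_ne_zero (L₁.injective (by rw [map_zero, hm]; simp [frobeniusSum]))
  obtain ⟨r, hr, z, hz⟩ := exists_mul_frobeniusSum_eq hn hrec hm₀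
  have hcard := Nat.card_le_two_of_injective_of_sq_eq_self
    ((mul_right_injective₀ hr).comp L₁.injective) fun x => by
      simpa only [Function.comp_apply, hm, hz] using frobeniusSum_one_sq hn (z * x)
  rw [GaloisField.card 2 10 (by norm_num)] at hcard
  norm_num at hcard
end
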